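/- arXiv:2105.00730 — 2 statements merged into one kernel-verified Lean document; each statement's English description precedes it below -/
import Mathlib

section
/- On the domain [0, 2π/α) × [0, 2π/β) with α² + β² = 1, the function ω = −a cos y − e^{−νt} cos y + e^{−νt}(c₁ sin y + c₂ cos y + c₃ sin(αx) sin(βy) + c₄ cos(αx) cos(βy) + c₅ sin(αx) cos(βy) + c₆ cos(αx) sin(βy)) solves the forced vorticity equation ∂ₜω = −J(Δ^{−1}ω, ω) + νΔω − νa cos y for any constants c₁,…,c₆, because all modes involved lie in the eigenspace of Δ with eigenvalue −1. -/
noncomputable section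

/-- Partial derivative in the first (x) variable. -/
def pdx (f : ℝ → ℝ → ℝ) : ℝ → ℝ → ℝ := fun x y => deriv (fun x' => f x' y) x

/-- Partial derivative in the second (y) variable. -/
def pdy (f : ℝ → ℝ → ℝ) : ℝ → ℝ → ℝ := fun x y => deriv (fun y' => f x y') y

/-- Laplacian. -/
def lap (f : ℝ → ℝ → ℝ) : ℝ → ℝ → ℝ := fun x y => pdx (pdx f) x y + pdy (pdy f) x y

/-- The Jacobian `J(f,g) = ∂ₓf ∂_y g − ∂_y f ∂ₓ g`. -/
def jac (f g : ℝ → ℝ → ℝ) : ℝ → ℝ → ℝ :=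
  fun x y => pdx f x y * pdy g x y - pdy f x y * pdx g x y

lemma hds (k x : ℝ) : HasDerivAt (fun x' => Real.sin (k * x')) (k * Real.cos (k * x)) x := by
  simpa [mul_comm, Function.comp_def] using (Real.hasDerivAt_sin (k * x)).comp x ((hasDerivAt_id x).const_mul k)

lemma hdc (k x : ℝ) : HasDerivAt (fun x' => Real.cos (k * x')) (-(k * Real.sin (k * x))) x := by
  simpa [mul_comm, Function.comp_def] using (Real.hasDerivAt_cos (k * x)).comp x ((hasDerivAt_id x).const_mul k)

lemma hde (k t : ℝ) : HasDerivAt (fun t' => Real.exp (k * t')) (k * Real.exp (k * t)) t := by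
  simpa [mul_comm, Function.comp_def] using (Real.hasDerivAt_exp (k * t)).comp t ((hasDerivAt_id t).const_mul k)

/-- On the extended torus `[0, 2π/α) × [0, 2π/β)` with `α² + β² = 1` and `1/β ∈ ℤ`, the
function `ω = −a cos y − e^{−νt} cos y + e^{−νt}(c₁ sin y + c₂ cos y + c₃ sin(αx)sin(βy)
+ c₄ cos(αx)cos(βy) + c₅ sin(αx)cos(βy) + c₆ cos(αx)sin(βy))` solves the forced vorticity
equation `∂ₜω = −J(Δ^{−1}ω, ω) + νΔω − νa cos y` for any constants, since all modes lie in
the eigenspace of `Δ` with eigenvalue `−1`, so that `Δ^{−1}ω = −ω`. -/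
theorem stmt9 (ν α β a c₁ c₂ c₃ c₄ c₅ c₆ : ℝ)
    (hν : 0 < ν) (hα : 0 < α) (hβ : 0 < β) (hαβ : α ^ 2 + β ^ 2 = 1)
    (hβint : ∃ k : ℤ, β * (k : ℝ) = 1) (ha : a = 0 ∨ a = 1)
    (ω : ℝ → ℝ → ℝ → ℝ)
    (hω : ω = fun t x y =>
      -a * Real.cos y - Real.exp (-ν * t) * Real.cos y +
        Real.exp (-ν * t) *
          (c₁ * Real.sin y + c₂ * Real.cos y +
           c₃ * Real.sin (α * x) * Real.sin (β * y) +
           c₄ * Real.cos (α * x) * Real.cos (β * y) +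
           c₅ * Real.sin (α * x) * Real.cos (β * y) +
           c₆ * Real.cos (α * x) * Real.sin (β * y))) :
    ∀ t x y : ℝ,
      (lap (ω t) x y = -(ω t x y)) ∧
      (deriv (fun t' => ω t' x y) t
        = -(jac (fun x' y' => -(ω t x' y')) (ω t) x y) + ν * lap (ω t) x y
          - ν * a * Real.cos y) := by
  subst hω
  intro t x y
  -- first x-derivative
  have Ex : ∀ X : ℝ, deriv (fun x' =>
      -a * Real.cos y - Real.exp (-ν * t) * Real.cos y +
        Real.exp (-ν * t) *
          (c₁ * Real.sin y + c₂ * Real.cos y +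
           c₃ * Real.sin (α * x') * Real.sin (β * y) +
           c₄ * Real.cos (α * x') * Real.cos (β * y) +
           c₅ * Real.sin (α * x') * Real.cos (β * y) +
           c₆ * Real.cos (α * x') * Real.sin (β * y))) X
      = Real.exp (-ν * t) * α *
          (c₃ * Real.cos (α * X) * Real.sin (β * y) -
           c₄ * Real.sin (α * X) * Real.cos (β * y) +
           c₅ * Real.cos (α * X) * Real.cos (β * y) -
           c₆ * Real.sin (α * X) * Real.sin (β * y)) := by
    intro X
    have h : HasDerivAt (fun x' =>
        -a * Real.cos y - Real.exp (-ν * t) * Real.cos y +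
          Real.exp (-ν * t) *
            (c₁ * Real.sin y + c₂ * Real.cos y +
             c₃ * Real.sin (α * x') * Real.sin (β * y) +
             c₄ * Real.cos (α * x') * Real.cos (β * y) +
             c₅ * Real.sin (α * x') * Real.cos (β * y) +
             c₆ * Real.cos (α * x') * Real.sin (β * y)))
        (0 + Real.exp (-ν * t) *
          (0 + c₃ * (α * Real.cos (α * X)) * Real.sin (β * y) +
           c₄ * -(α * Real.sin (α * X)) * Real.cos (β * y) +
           c₅ * (α * Real.cos (α * X)) * Real.cos (β * y) +
           c₆ * -(α * Real.sin (α * X)) * Real.sin (β * y))) X := by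
      exact (hasDerivAt_const X (-a * Real.cos y - Real.exp (-ν * t) * Real.cos y)).add
        (((((((hasDerivAt_const X (c₁ * Real.sin y + c₂ * Real.cos y)).add
          (((hds α X).const_mul c₃).mul_const (Real.sin (β * y)))).add
          (((hdc α X).const_mul c₄).mul_const (Real.cos (β * y)))).add
          (((hds α X).const_mul c₅).mul_const (Real.cos (β * y)))).add
          (((hdc α X).const_mul c₆).mul_const (Real.sin (β * y))))).const_mul
          (Real.exp (-ν * t)))
    rw [h.deriv]; ring
  -- second x-derivative
  have Exx : deriv (fun X =>
      Real.exp (-ν * t) * α *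
        (c₃ * Real.cos (α * X) * Real.sin (β * y) -
         c₄ * Real.sin (α * X) * Real.cos (β * y) +
         c₅ * Real.cos (α * X) * Real.cos (β * y) -
         c₆ * Real.sin (α * X) * Real.sin (β * y))) x
      = Real.exp (-ν * t) * α *
          (c₃ * -(α * Real.sin (α * x)) * Real.sin (β * y) -
           c₄ * (α * Real.cos (α * x)) * Real.cos (β * y) +
           c₅ * -(α * Real.sin (α * x)) * Real.cos (β * y) -
           c₆ * (α * Real.cos (α * x)) * Real.sin (β * y)) :=
    HasDerivAt.deriv <| ((((((hdc α x).const_mul c₃).mul_const (Real.sin (β * y))).sub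
      (((hds α x).const_mul c₄).mul_const (Real.cos (β * y)))).add
      (((hdc α x).const_mul c₅).mul_const (Real.cos (β * y)))).sub
      (((hds α x).const_mul c₆).mul_const (Real.sin (β * y)))).const_mul
      (Real.exp (-ν * t) * α)
  -- first y-derivative
  have Ey : ∀ Y : ℝ, deriv (fun y' =>
      -a * Real.cos y' - Real.exp (-ν * t) * Real.cos y' +
        Real.exp (-ν * t) *
          (c₁ * Real.sin y' + c₂ * Real.cos y' +
           c₃ * Real.sin (α * x) * Real.sin (β * y') +
           c₄ * Real.cos (α * x) * Real.cos (β * y') +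
           c₅ * Real.sin (α * x) * Real.cos (β * y') +
           c₆ * Real.cos (α * x) * Real.sin (β * y'))) Y
      = a * Real.sin Y + Real.exp (-ν * t) * Real.sin Y +
        Real.exp (-ν * t) *
          (c₁ * Real.cos Y - c₂ * Real.sin Y +
           c₃ * β * Real.sin (α * x) * Real.cos (β * Y) -
           c₄ * β * Real.cos (α * x) * Real.sin (β * Y) -
           c₅ * β * Real.sin (α * x) * Real.sin (β * Y) +
           c₆ * β * Real.cos (α * x) * Real.cos (β * Y)) := by
    intro Y
    have h : HasDerivAt (fun y' =>
        -a * Real.cos y' - Real.exp (-ν * t) * Real.cos y' +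
          Real.exp (-ν * t) *
            (c₁ * Real.sin y' + c₂ * Real.cos y' +
             c₃ * Real.sin (α * x) * Real.sin (β * y') +
             c₄ * Real.cos (α * x) * Real.cos (β * y') +
             c₅ * Real.sin (α * x) * Real.cos (β * y') +
             c₆ * Real.cos (α * x) * Real.sin (β * y')))
        (-a * -Real.sin Y - Real.exp (-ν * t) * -Real.sin Y +
          Real.exp (-ν * t) *
            (c₁ * Real.cos Y + c₂ * -Real.sin Y +
             c₃ * Real.sin (α * x) * (β * Real.cos (β * Y)) +
             c₄ * Real.cos (α * x) * -(β * Real.sin (β * Y)) +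
             c₅ * Real.sin (α * x) * -(β * Real.sin (β * Y)) +
             c₆ * Real.cos (α * x) * (β * Real.cos (β * Y)))) Y := by
      exact (((Real.hasDerivAt_cos Y).const_mul (-a)).sub
        ((Real.hasDerivAt_cos Y).const_mul (Real.exp (-ν * t)))).add
        ((((((((Real.hasDerivAt_sin Y).const_mul c₁).add
          ((Real.hasDerivAt_cos Y).const_mul c₂)).add
          ((hds β Y).const_mul (c₃ * Real.sin (α * x)))).add
          ((hdc β Y).const_mul (c₄ * Real.cos (α * x)))).add
          ((hdc β Y).const_mul (c₅ * Real.sin (α * x)))).add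
          ((hds β Y).const_mul (c₆ * Real.cos (α * x)))).const_mul
          (Real.exp (-ν * t)))
    rw [h.deriv]; ring
  -- second y-derivative
  have Eyy : deriv (fun Y =>
      a * Real.sin Y + Real.exp (-ν * t) * Real.sin Y +
        Real.exp (-ν * t) *
          (c₁ * Real.cos Y - c₂ * Real.sin Y +
           c₃ * β * Real.sin (α * x) * Real.cos (β * Y) -
           c₄ * β * Real.cos (α * x) * Real.sin (β * Y) -
           c₅ * β * Real.sin (α * x) * Real.sin (β * Y) +
           c₆ * β * Real.cos (α * x) * Real.cos (β * Y))) y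
      = a * Real.cos y + Real.exp (-ν * t) * Real.cos y +
        Real.exp (-ν * t) *
          (c₁ * -Real.sin y - c₂ * Real.cos y +
           c₃ * β * Real.sin (α * x) * -(β * Real.sin (β * y)) -
           c₄ * β * Real.cos (α * x) * (β * Real.cos (β * y)) -
           c₅ * β * Real.sin (α * x) * (β * Real.cos (β * y)) +
           c₆ * β * Real.cos (α * x) * -(β * Real.sin (β * y))) :=
    HasDerivAt.deriv <| (((Real.hasDerivAt_sin y).const_mul a).add
      ((Real.hasDerivAt_sin y).const_mul (Real.exp (-ν * t)))).add
      ((((((((Real.hasDerivAt_cos y).const_mul c₁).sub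
        ((Real.hasDerivAt_sin y).const_mul c₂)).add
        ((hdc β y).const_mul (c₃ * β * Real.sin (α * x)))).sub
        ((hds β y).const_mul (c₄ * β * Real.cos (α * x)))).sub
        ((hds β y).const_mul (c₅ * β * Real.sin (α * x)))).add
        ((hdc β y).const_mul (c₆ * β * Real.cos (α * x)))).const_mul
        (Real.exp (-ν * t)))
  -- time derivative
  have Et : deriv (fun t' =>
      -a * Real.cos y - Real.exp (-ν * t') * Real.cos y +
        Real.exp (-ν * t') *
          (c₁ * Real.sin y + c₂ * Real.cos y +
           c₃ * Real.sin (α * x) * Real.sin (β * y) +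
           c₄ * Real.cos (α * x) * Real.cos (β * y) +
           c₅ * Real.sin (α * x) * Real.cos (β * y) +
           c₆ * Real.cos (α * x) * Real.sin (β * y))) t
      = 0 - -ν * Real.exp (-ν * t) * Real.cos y +
        -ν * Real.exp (-ν * t) *
          (c₁ * Real.sin y + c₂ * Real.cos y +
           c₃ * Real.sin (α * x) * Real.sin (β * y) +
           c₄ * Real.cos (α * x) * Real.cos (β * y) +
           c₅ * Real.sin (α * x) * Real.cos (β * y) +
           c₆ * Real.cos (α * x) * Real.sin (β * y)) :=
    HasDerivAt.deriv <| ((hasDerivAt_const t (-a * Real.cos y)).sub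
      ((hde (-ν) t).mul_const (Real.cos y))).add
      ((hde (-ν) t).mul_const
        (c₁ * Real.sin y + c₂ * Real.cos y +
         c₃ * Real.sin (α * x) * Real.sin (β * y) +
         c₄ * Real.cos (α * x) * Real.cos (β * y) +
         c₅ * Real.sin (α * x) * Real.cos (β * y) +
         c₆ * Real.cos (α * x) * Real.sin (β * y)))
  constructor
  · simp only [lap, pdx, pdy, Ex, Ey, Exx, Eyy]
    linear_combination (-Real.exp (-ν * t) *
      (c₃ * Real.sin (α * x) * Real.sin (β * y) +
       c₄ * Real.cos (α * x) * Real.cos (β * y) +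
       c₅ * Real.sin (α * x) * Real.cos (β * y) +
       c₆ * Real.cos (α * x) * Real.sin (β * y))) * hαβ
  · simp only [lap, pdx, pdy, jac, deriv.fun_neg, Ex, Ey, Exx, Eyy, Et]
    linear_combination (ν * Real.exp (-ν * t) *
      (c₃ * Real.sin (α * x) * Real.sin (β * y) +
       c₄ * Real.cos (α * x) * Real.cos (β * y) +
       c₅ * Real.sin (α * x) * Real.cos (β * y) +
       c₆ * Real.cos (α * x) * Real.sin (β * y))) * hαβ
end
end

section
/- Let f: [0,T] → ℝ≥0 be differentiable with f' ≤ −2νλf on [0,T]. If also f(t₀+t₁) ≤ e^{−(8/5)λνt₁} f(t₀) whenever a certain alternative holds, and the interval [0, τ/ν] is covered by such decay intervals with t₁ ≤ τ/(3ν), then there exists t₂ ∈ [2τ/(3ν), τ/ν] with f(t₂) ≤ e^{−(8/5)λνt₂} f(0). -/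
/-- Covering/concatenation lemma for enhanced dissipation: if `[0, τ/ν]` is covered up to a
time `s k ∈ [2τ/(3ν), τ/ν]` by consecutive intervals `[s i, s (i+1)]` of length at most
`τ/(3ν)` on each of which `f` decays by the factor `e^{−(8/5)λν·length}`, then there exists
`t₂ ∈ [2τ/(3ν), τ/ν]` with `f(t₂) ≤ e^{−(8/5)λν t₂} f(0)`. -/
theorem stmt17 (ν lam τ : ℝ) (f : ℝ → ℝ) (k : ℕ) (s : ℕ → ℝ)
    (hν : 0 < ν) (hlam : 0 < lam) (hτ : 0 < τ)
    (hs0 : s 0 = 0)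
    (hmono : ∀ i, i < k → s i ≤ s (i + 1))
    (hstep : ∀ i, i < k → s (i + 1) - s i ≤ τ / (3 * ν))
    (hend1 : 2 * τ / (3 * ν) ≤ s k) (hend2 : s k ≤ τ / ν)
    (hdecay : ∀ i, i < k →
      f (s (i + 1)) ≤ Real.exp (-(8 / 5) * lam * ν * (s (i + 1) - s i)) * f (s i)) :
    ∃ t₂ ∈ Set.Icc (2 * τ / (3 * ν)) (τ / ν),
      f t₂ ≤ Real.exp (-(8 / 5) * lam * ν * t₂) * f 0 := by
  refine ⟨s k, ⟨hend1, hend2⟩, ?_⟩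
  have key : ∀ j, j ≤ k → f (s j) ≤ Real.exp (-(8 / 5) * lam * ν * s j) * f 0 := by
    intro j hj
    induction j with
    | zero => simp [hs0]
    | succ n ih =>
      have hn : n < k := Nat.lt_of_succ_le hj
      have h1 := hdecay n hn
      have h2 := ih (Nat.le_of_lt hn)
      calc f (s (n + 1)) ≤ Real.exp (-(8 / 5) * lam * ν * (s (n + 1) - s n)) * f (s n) := h1
        _ ≤ Real.exp (-(8 / 5) * lam * ν * (s (n + 1) - s n)) *
              (Real.exp (-(8 / 5) * lam * ν * s n) * f 0) :=
            mul_le_mul_of_nonneg_left h2 (Real.exp_pos _).le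
        _ = Real.exp (-(8 / 5) * lam * ν * s (n + 1)) * f 0 := by
            rw [← mul_assoc, ← Real.exp_add]; ring_nf
  exact key k le_rfl
end
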